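/- arXiv:1706.02540 — 5 statements merged into one kernel-verified Lean document; each statement's English description precedes it below -/
import Mathlib

section
/- Let ι be a finite type, d ≥ 2, and let S_1,…,S_d be subsets of ι with generalized line graph L on vertex set {1,…,d}. For each k let M_k be a real square matrix indexed by ι that is supported on S_k. Fix s with 1 ≤ s ≤ d−1, let F = M_d·M_{d−1}⋯M_{s+2}·M_{s+1}·M_s⋯M_1 and let F' = M_d·M_{d−1}⋯M_{s+2}·M_s·M_{s+1}·M_{s−1}⋯M_1 (i.e., the same ordered product with the factors M_s and M_{s+1} interchanged). If either (i) S_s ∩ S_{s+1} = ∅, or (ii) S_s ∩ S_{s+1} ≠ ∅ but no cycle of L passes through vertex s or through vertex s+1, then the characteristic polynomial of F equals the characteristic polynomial of F'. -/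
/-- A square real matrix `M` indexed by `ι` is *supported on* `S ⊆ ι` if
`M i j` equals the Kronecker delta `δ_{ij}` whenever `i` and `j` are not both in `S`. -/
def SupportedOn {ι : Type*} [DecidableEq ι] (M : Matrix ι ι ℝ) (S : Set ι) : Prop :=
  ∀ i j, ¬(i ∈ S ∧ j ∈ S) → M i j = if i = j then 1 else 0

/-- The generalized line graph of a family of sets. -/
def genLineGraph {ι : Type*} {d : ℕ} (S : Fin d → Set ι) : SimpleGraph (Fin d) where
  Adj k l := k ≠ l ∧ (S k ∩ S l).Nonempty
  symm := by
    constructor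
    intro k l h
    exact ⟨h.1.symm, by rw [Set.inter_comm]; exact h.2⟩
  loopless := by
    constructor
    intro k h
    exact h.1 rfl

/-!
Write `F = P (M_{s+1} M_s) Q` and `F' = P (M_s M_{s+1}) Q`. Since `charpoly (X Y) = charpoly (Y X)`,
these are the characteristic polynomials of `R M_{s+1} M_s` and `R M_s M_{s+1}` with `R = Q P`.
Matrices supported on disjoint sets commute, which settles case (i). In case (ii) the edge
`{s, s+1}` of `L` lies on no cycle, so it is a bridge. Split the factors of `R` into those
reachable from `s+1` in `L` minus this edge (product `R₁`) and the others (product `R₀`).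
Factors from different groups are non-adjacent in `L`, hence commute, so `R = R₁ R₀`; moreover
`R₁` commutes with `M_s` and `R₀` with `M_{s+1}`. Then `R₁ R₀ M_{s+1} M_s = (R₁ M_{s+1}) (R₀ M_s)`
and `R₁ R₀ M_s M_{s+1} = (R₀ M_s) (R₁ M_{s+1})` have the same characteristic polynomial.
-/

theorem List.prod_map_filter_mul_prod_map_filter_not_of_commute {α M : Type*} [Monoid M]
    (p : α → Prop) [DecidablePred p] (f : α → M) (l : List α)
    (h : ∀ x ∈ l, ∀ y ∈ l, p x → ¬p y → Commute (f x) (f y)) :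
    ((l.filter p).map f).prod * ((l.filter fun x => ¬p x).map f).prod = (l.map f).prod := by
  induction l with
  | nil => simp
  | cons x l ih =>
    have ih := ih fun y hy z hz => h y (.tail _ hy) z (.tail _ hz)
    by_cases hx : p x
    · simp [hx, mul_assoc, ← ih]
    · have hcomm : Commute (f x) ((l.filter p).map f).prod :=
        (Commute.list_prod_right _ _ fun _ hy => by
          obtain ⟨y, hyl, rfl⟩ := List.mem_map.1 hy
          have hy := List.mem_filter.1 hyl
          exact (h y (.tail _ hy.1) x (.head _) (by simpa using hy.2) hx).symm)
      simp only [List.filter_cons, hx, decide_false, decide_not, Bool.not_false,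
        Bool.false_eq_true, ↓reduceIte, List.map_cons, List.prod_cons]
      rw [← mul_assoc, ← hcomm.eq, mul_assoc]
      simpa using congrArg (f x * ·) ih

theorem List.exists_finRange_eq_append_cons_cons {d : ℕ} {a b : Fin d}
    (hab : (b : ℕ) = a + 1) : ∃ s t, List.finRange d = s ++ a :: b :: t := by
  refine ⟨(List.finRange d).take a, (List.finRange d).drop (a + 2), ?_⟩
  have hbd : (a : ℕ) + 1 < d := hab ▸ b.isLt
  conv_lhs => rw [← List.take_append_drop a (List.finRange d),
    List.drop_eq_getElem_cons (by simp), List.drop_eq_getElem_cons (by simpa using hbd)]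
  congr 3 <;> ext <;> simp [hab]

theorem Matrix.charpoly_mul_mul_swap_of_commute {n R : Type*} [Fintype n] [DecidableEq n]
    [CommRing R] {A B X Y : Matrix n n R}
    (hAB : Commute A B) (hAX : Commute A X) (hBY : Commute B Y) :
    (A * B * (Y * X)).charpoly = (A * B * (X * Y)).charpoly :=
  calc (A * B * (Y * X)).charpoly = ((A * Y) * (B * X)).charpoly := by
        rw [mul_assoc, ← mul_assoc B, hBY.eq]; simp only [mul_assoc]
    _ = ((B * X) * (A * Y)).charpoly := Matrix.charpoly_mul_comm _ _
    _ = (A * B * (X * Y)).charpoly := by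
        rw [mul_assoc, ← mul_assoc X, ← hAX.eq, ← mul_assoc, ← mul_assoc, ← hAB.eq]
        simp only [mul_assoc]

theorem Matrix.charpoly_prod_map_reverse_append_cons_cons {α n R : Type*} [Fintype n]
    [DecidableEq n] [CommRing R] (f : α → Matrix n n R) (s t : List α) (x y : α) :
    ((s ++ x :: y :: t).map f).reverse.prod.charpoly =
      (((s.reverse ++ t.reverse).map f).prod * (f y * f x)).charpoly := by
  simp only [List.map_append, List.map_cons, List.map_reverse, List.reverse_append,
    List.reverse_cons, List.prod_append, List.prod_cons, List.prod_nil, List.append_assoc,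
    List.singleton_append, mul_one, mul_assoc]
  rw [Matrix.charpoly_mul_comm (s.map f).reverse.prod]
  simp only [mul_assoc]

theorem SimpleGraph.reachable_deleteEdges_iff_of_adj {V : Type*} {G : SimpleGraph V}
    {a b x y z : V} (hxy : G.Adj x y) (hxa : x ≠ a) (hxb : x ≠ b) :
    (G.deleteEdges {s(a, b)}).Reachable z x ↔ (G.deleteEdges {s(a, b)}).Reachable z y := by
  have hadj : (G.deleteEdges {s(a, b)}).Adj x y := by
    simp [hxy, hxa, hxb]
  exact ⟨fun h => h.trans hadj.reachable, fun h => h.trans hadj.reachable.symm⟩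

theorem SimpleGraph.isBridge_of_forall_isCycle_notMem_support {V : Type*} {G : SimpleGraph V}
    {a b : V} (hab : G.Adj a b) (h : ∀ (v : V) (w : G.Walk v v), w.IsCycle → a ∉ w.support) :
    G.IsBridge s(a, b) :=
  (isBridge_iff_forall_cycle_notMem hab).2 fun _ w hw he =>
    h _ w hw (w.fst_mem_support_of_mem_edges he)

theorem SupportedOn.sub_one_apply_eq_zero {ι : Type*} [DecidableEq ι] {M : Matrix ι ι ℝ}
    {S : Set ι} (hM : SupportedOn M S) {i j : ι} (hij : ¬(i ∈ S ∧ j ∈ S)) :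
    (M - 1) i j = 0 := by
  simp [hM i j hij, Matrix.one_apply]

theorem SupportedOn.sub_one_mul_sub_one_eq_zero {ι : Type*} [Fintype ι] [DecidableEq ι]
    {M N : Matrix ι ι ℝ} {S T : Set ι} (hM : SupportedOn M S) (hN : SupportedOn N T)
    (hST : Disjoint S T) : (M - 1) * (N - 1) = 0 := by
  ext i j
  simp only [Matrix.mul_apply, Matrix.zero_apply]
  refine Finset.sum_eq_zero fun k _ => ?_
  by_cases hk : k ∈ S
  · rw [hN.sub_one_apply_eq_zero fun h => hST.notMem_of_mem_left hk h.1, mul_zero]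
  · rw [hM.sub_one_apply_eq_zero fun h => hk h.2, zero_mul]

theorem SupportedOn.commute {ι : Type*} [Fintype ι] [DecidableEq ι] {M N : Matrix ι ι ℝ}
    {S T : Set ι} (hM : SupportedOn M S) (hN : SupportedOn N T) (hST : Disjoint S T) :
    Commute M N := by
  -- `M N - N M = (M - 1) (N - 1) - (N - 1) (M - 1)`
  have h := congrArg₂ (· - ·) (hM.sub_one_mul_sub_one_eq_zero hN hST)
    (hN.sub_one_mul_sub_one_eq_zero hM hST.symm)
  simp only [sub_self, mul_sub, sub_mul, mul_one, one_mul] at h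
  exact sub_eq_zero.1 (by rw [← h]; abel)

section LineGraph

variable {ι : Type*} [Fintype ι] [DecidableEq ι] {d : ℕ} {S : Fin d → Set ι}
  {M : Fin d → Matrix ι ι ℝ}

theorem commute_of_not_adj_genLineGraph (hM : ∀ k, SupportedOn (M k) (S k)) {k l : Fin d}
    (h : ¬(genLineGraph S).Adj k l) : Commute (M k) (M l) := by
  by_cases hkl : k = l
  · rw [hkl]
  · exact (hM k).commute (hM l) <| Set.disjoint_iff_inter_eq_empty.2 <|
      Set.not_nonempty_iff_eq_empty.1 fun hne => h ⟨hkl, hne⟩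

theorem charpoly_prod_mul_swap_of_isBridge (hM : ∀ k, SupportedOn (M k) (S k)) {a b : Fin d}
    (hbridge : (genLineGraph S).IsBridge s(a, b)) (l : List (Fin d))
    (hl : ∀ k ∈ l, k ≠ a ∧ k ≠ b) :
    ((l.map M).prod * (M b * M a)).charpoly = ((l.map M).prod * (M a * M b)).charpoly := by
  classical
  set H := (genLineGraph S).deleteEdges {s(a, b)}
  have hside (k) (hk : k ∈ l) (m) (hkm : (genLineGraph S).Adj k m) :
      H.Reachable b k ↔ H.Reachable b m :=
    SimpleGraph.reachable_deleteEdges_iff_of_adj hkm (hl k hk).1 (hl k hk).2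
  have hcross : ∀ x ∈ l, ∀ y ∈ l, H.Reachable b x → ¬H.Reachable b y → Commute (M x) (M y) :=
    fun x _ y hy hx hy' =>
      commute_of_not_adj_genLineGraph hM fun hxy => hy' ((hside y hy x hxy.symm).2 hx)
  rw [← l.prod_map_filter_mul_prod_map_filter_not_of_commute (H.Reachable b) M hcross]
  refine Matrix.charpoly_mul_mul_swap_of_commute ?_ ?_ ?_
  · refine Commute.list_prod_left _ _ (List.forall_mem_map.2 fun x hx => ?_)
    refine Commute.list_prod_right _ _ (List.forall_mem_map.2 fun y hy => ?_)
    simp only [List.mem_filter, decide_eq_true_eq] at hx hy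
    exact hcross x hx.1 y hy.1 hx.2 hy.2
  · refine Commute.list_prod_left _ _ (List.forall_mem_map.2 fun x hx => ?_)
    simp only [List.mem_filter, decide_eq_true_eq] at hx
    exact commute_of_not_adj_genLineGraph hM fun hxa =>
      hbridge ((hside x hx.1 a hxa).1 hx.2).symm
  · refine Commute.list_prod_left _ _ (List.forall_mem_map.2 fun x hx => ?_)
    simp only [List.mem_filter, decide_eq_true_eq] at hx
    exact commute_of_not_adj_genLineGraph hM fun hxb =>
      hx.2 ((hside x hx.1 b hxb).2 .rfl)

end LineGraph

theorem stmt2_general {ι : Type*} [Fintype ι] [DecidableEq ι] {d : ℕ}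
    (S : Fin d → Set ι) (M : Fin d → Matrix ι ι ℝ)
    (hM : ∀ k, SupportedOn (M k) (S k))
    (a b : Fin d) (hab : (b : ℕ) = (a : ℕ) + 1)
    (F F' : Matrix ι ι ℝ)
    (hF : F = (List.ofFn fun k => M k).reverse.prod)
    (hF' : F' = (List.ofFn fun k => M (Equiv.swap a b k)).reverse.prod)
    (hcond : S a ∩ S b = ∅ ∨
      ((S a ∩ S b).Nonempty ∧
        ∀ (v : Fin d) (w : (genLineGraph S).Walk v v), w.IsCycle →
          a ∉ w.support ∧ b ∉ w.support)) :
    F.charpoly = F'.charpoly := by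
  obtain ⟨s, t, hst⟩ := List.exists_finRange_eq_append_cons_cons hab
  have hnd : (s ++ a :: b :: t).Nodup := hst ▸ List.nodup_finRange d
  have hne : ∀ k ∈ s ++ t, k ≠ a ∧ k ≠ b := by
    grind [List.nodup_append, List.nodup_cons]
  have hswap : (s ++ a :: b :: t).map (Equiv.swap a b) = s ++ b :: a :: t := by
    have hfix (l : List (Fin d)) (hl : l ⊆ s ++ t) : l.map (Equiv.swap a b) = l :=
      (List.map_congr_left fun k hk =>
        Equiv.swap_apply_of_ne_of_ne (hne k (hl hk)).1 (hne k (hl hk)).2).trans l.map_id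
    simp only [List.map_append, List.map_cons, Equiv.swap_apply_left, Equiv.swap_apply_right,
      hfix s (by simp), hfix t (by simp)]
  have hF₀ : F = ((s ++ a :: b :: t).map M).reverse.prod := by
    rw [hF, List.ofFn_eq_map, hst]
  have hF₁ : F' = ((s ++ b :: a :: t).map M).reverse.prod := by
    rw [hF', List.ofFn_eq_map, hst, ← hswap, List.map_map]
    rfl
  rw [hF₀, hF₁, Matrix.charpoly_prod_map_reverse_append_cons_cons,
    Matrix.charpoly_prod_map_reverse_append_cons_cons]
  rcases hcond with hdisj | ⟨hinter, hcyc⟩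
  · rw [((hM a).commute (hM b) (Set.disjoint_iff_inter_eq_empty.2 hdisj)).eq]
  · have hadj : (genLineGraph S).Adj a b := ⟨fun h => by simp [h] at hab, hinter⟩
    refine charpoly_prod_mul_swap_of_isBridge hM ?_ _ fun k hk => hne k (by simpa using hk)
    exact SimpleGraph.isBridge_of_forall_isCycle_notMem_support hadj
      fun v w hw => (hcyc v w hw).1

/-- Eigenvalue invariance under swapping two consecutive factors: indices are
`0`-based, so `a`, `b` with `b = a + 1` play the role of `s`, `s+1`. -/
theorem stmt2 {ι : Type*} [Fintype ι] [DecidableEq ι] {d : ℕ} (hd : 2 ≤ d)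
    (S : Fin d → Set ι) (M : Fin d → Matrix ι ι ℝ)
    (hM : ∀ k, SupportedOn (M k) (S k))
    (a b : Fin d) (hab : (b : ℕ) = (a : ℕ) + 1)
    (F F' : Matrix ι ι ℝ)
    (hF : F = (List.ofFn fun k => M k).reverse.prod)
    (hF' : F' = (List.ofFn fun k => M (Equiv.swap a b k)).reverse.prod)
    (hcond : S a ∩ S b = ∅ ∨
      ((S a ∩ S b).Nonempty ∧
        ∀ (v : Fin d) (w : (genLineGraph S).Walk v v), w.IsCycle →
          a ∉ w.support ∧ b ∉ w.support)) :
    F.charpoly = F'.charpoly :=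
  stmt2_general S M hM a b hab F F' hF hF' hcond
end

section
/- Let ι be a finite type, d ≥ 1, and let S_1,…,S_d be subsets of ι whose generalized line graph L contains no cycle (L is acyclic). For each k let M_k be a real square matrix indexed by ι that is supported on S_k. Then for every permutation π of {1,…,d}, the characteristic polynomial of the ordered product M_{π(d)}·M_{π(d−1)}⋯M_{π(1)} equals the characteristic polynomial of M_d·M_{d−1}⋯M_1. -/
/-! Matrices supported on disjoint sets commute, since `(A - 1) * (B - 1) = 0`, and the
characteristic polynomial of a product is invariant under rotation of the factors. These two moves
already relate all orderings of a product of elements `x v` indexed by the vertices of a forest in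
which non-adjacent elements commute, under any `f` with `f (a * b) = f (b * a)`: a leaf `v` commutes
with every factor except that of its neighbour `w`, so after a rotation it can be moved next to
`w`; replacing `x w` by `x v * x w` and deleting `v` leaves a smaller forest. -/

namespace SimpleGraph

variable {V : Type*} {G : SimpleGraph V}

lemma IsAcyclic.exists_subsingleton_neighborSet [Finite V] [Nonempty V] (hG : G.IsAcyclic) :
    ∃ v, (G.neighborSet v).Subsingleton := by
  obtain ⟨u, v, p, hp, hmax⟩ := Walk.exists_isPath_forall_isPath_length_le_length G
  -- a neighbour of `u` off the longest path `p` would extend it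
  have hsnd : ∀ w, G.Adj u w → w = p.snd := fun w hw =>
    hG.eq_snd_of_adj_start hp hw <| by
      by_contra hw'
      have := hmax _ _ (p.cons hw.symm) (hp.cons hw')
      simp at this
  exact ⟨u, fun w hw w' hw' => (hsnd w hw).trans (hsnd w' hw').symm⟩

lemma IsAcyclic.exists_mem_ne_forall_adj_eq {s : Set V} (hG : G.IsAcyclic) (hfin : s.Finite)
    (hs : s.Nontrivial) : ∃ v ∈ s, ∃ w ∈ s, v ≠ w ∧ ∀ q ∈ s, G.Adj v q → q = w := by
  have := hfin.to_subtype
  have := hs.nonempty.to_subtype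
  obtain ⟨⟨v, hv⟩, hleaf⟩ := (hG.induce s).exists_subsingleton_neighborSet
  have hleaf' : ∀ a ∈ s, ∀ b ∈ s, G.Adj v a → G.Adj v b → a = b := fun a ha b hb hva hvb =>
    congrArg Subtype.val (@hleaf ⟨a, ha⟩ hva ⟨b, hb⟩ hvb)
  by_cases hnbr : ∃ w ∈ s, G.Adj v w
  · obtain ⟨w, hw, hvw⟩ := hnbr
    exact ⟨v, hv, w, hw, hvw.ne, fun q hq hvq => hleaf' q hq w hw hvq hvw⟩
  · push Not at hnbr
    obtain ⟨w, hw, hwv⟩ := hs.exists_ne v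
    exact ⟨v, hv, w, hw, hwv.symm, fun q hq hvq => absurd hvq (hnbr q hq)⟩

end SimpleGraph

section ClassFunction

variable {M β α : Type*} [Monoid M] [DecidableEq α] {f : M → β}

lemma prod_map_cons_eq_prod_map_update {r : List α} (hr : r.Nodup) {v w : α} (hw : w ∈ r)
    (x : α → M) (hcomm : ∀ q ∈ r, q ≠ w → Commute (x v) (x q)) :
    ((v :: r).map x).prod = (r.map (Function.update x w (x v * x w))).prod := by
  obtain ⟨y, z, rfl⟩ := List.append_of_mem hw
  have hwyz : w ∉ y ++ z := (List.nodup_cons.mp (List.nodup_middle.mp hr)).1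
  have hwy : w ∉ y := fun h => hwyz (List.mem_append_left z h)
  have hwz : w ∉ z := fun h => hwyz (List.mem_append_right y h)
  have hmap : ∀ t : List α, w ∉ t → t.map (Function.update x w (x v * x w)) = t.map x :=
    fun t ht => List.map_congr_left fun q hq =>
      Function.update_of_ne (ne_of_mem_of_not_mem hq ht) _ _
  have hcy : Commute (x v) (y.map x).prod := Commute.list_prod_right _ _ <| by
    simp only [List.mem_map]
    rintro _ ⟨q, hq, rfl⟩
    exact hcomm q (by simp [hq]) (ne_of_mem_of_not_mem hq hwy)
  simp only [List.map_cons, List.map_append, List.prod_cons, List.prod_append, hmap y hwy,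
    hmap z hwz, Function.update_self]
  rw [← mul_assoc, hcy.eq, mul_assoc, mul_assoc]

lemma commute_update_of_forall_adj_eq {G : SimpleGraph α} {l : List α} (hl : l.Nodup)
    {v w : α} (hv : v ∈ l) (hw : w ∈ l) (hleaf : ∀ q ∈ l, G.Adj v q → q = w) (x : α → M)
    (hcomm : ∀ a ∈ l, ∀ b ∈ l, a ≠ b → ¬G.Adj a b → Commute (x a) (x b)) :
    ∀ a ∈ l.erase v, ∀ b ∈ l.erase v, a ≠ b → ¬G.Adj a b →
      Commute (Function.update x w (x v * x w) a) (Function.update x w (x v * x w) b) := by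
  have hmem : ∀ {q}, q ∈ l.erase v → q ∈ l ∧ q ≠ v := fun hq =>
    ⟨List.mem_of_mem_erase hq, (hl.mem_erase_iff.mp hq).1⟩
  have hcw : ∀ q ∈ l.erase v, q ≠ w → ¬G.Adj w q → Commute (x v * x w) (x q) :=
    fun q hq hqw hwq => Commute.mul_left
      (hcomm v hv q (hmem hq).1 (hmem hq).2.symm fun h => hqw (hleaf q (hmem hq).1 h))
      (hcomm w hw q (hmem hq).1 (Ne.symm hqw) hwq)
  intro a ha b hb hab hadj
  by_cases haw : a = w
  · subst haw
    simpa [Function.update_of_ne (Ne.symm hab)] using hcw b hb (Ne.symm hab) hadj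
  by_cases hbw : b = w
  · subst hbw
    simpa [Function.update_of_ne hab] using (hcw a ha hab fun h => hadj h.symm).symm
  simpa [Function.update_of_ne haw, Function.update_of_ne hbw] using
    hcomm a (hmem ha).1 b (hmem hb).1 hab hadj

variable (hf : ∀ a b, f (a * b) = f (b * a))
include hf

lemma apply_prod_append_comm (l₁ l₂ : List M) : f (l₁ ++ l₂).prod = f (l₂ ++ l₁).prod := by
  rw [List.prod_append, List.prod_append, hf]

lemma apply_prod_map_eq_erase_update {l : List α} (hl : l.Nodup) {v w : α} (hv : v ∈ l)
    (hw : w ∈ l) (hvw : v ≠ w) (x : α → M)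
    (hcomm : ∀ q ∈ l, q ≠ v → q ≠ w → Commute (x v) (x q)) :
    f (l.map x).prod = f ((l.erase v).map (Function.update x w (x v * x w))).prod := by
  obtain ⟨a, b, rfl⟩ := List.append_of_mem hv
  have hva : v ∉ a := fun h =>
    (List.nodup_cons.mp (List.nodup_middle.mp hl)).1 (List.mem_append_left b h)
  have hrot : (v :: (b ++ a)).Perm (a ++ v :: b) :=
    (List.perm_append_comm.cons v).trans List.perm_middle.symm
  have hnd : (v :: (b ++ a)).Nodup := hrot.nodup_iff.mpr hl
  rw [List.erase_append_right _ hva, List.erase_cons_head, List.map_append, List.map_append,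
    apply_prod_append_comm hf, apply_prod_append_comm hf (a.map _), ← List.map_append,
    ← List.map_append, List.cons_append,
    prod_map_cons_eq_prod_map_update (List.nodup_cons.mp hnd).2 ?_ x ?_]
  · simpa [hvw.symm, or_comm] using hw
  · intro q hq hqw
    exact hcomm q (hrot.subset (List.mem_cons_of_mem _ hq))
      (fun h => (List.nodup_cons.mp hnd).1 (h ▸ hq)) hqw

theorem SimpleGraph.IsAcyclic.apply_prod_map_eq_of_perm {G : SimpleGraph α} (hG : G.IsAcyclic)
    {l l' : List α} (hl : l.Nodup) (hll' : l.Perm l') (x : α → M)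
    (hcomm : ∀ a ∈ l, ∀ b ∈ l, a ≠ b → ¬G.Adj a b → Commute (x a) (x b)) :
    f (l.map x).prod = f (l'.map x).prod := by
  induction hn : l.length generalizing l l' x with
  | zero =>
    obtain rfl := List.length_eq_zero_iff.mp hn
    rw [List.nil_perm.mp hll']
  | succ n ih =>
    rcases l with _ | ⟨a, _ | ⟨b, t⟩⟩
    · simp at hn
    · rw [List.perm_singleton.mp hll'.symm]
    have hs : {q | q ∈ a :: b :: t}.Nontrivial :=
      ⟨a, by simp, b, by simp, fun h => (List.nodup_cons.mp hl).1 (by simp [h])⟩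
    obtain ⟨v, hv, w, hw, hvw, hleaf⟩ := hG.exists_mem_ne_forall_adj_eq (List.finite_toSet _) hs
    set l := a :: b :: t
    have hcv : ∀ q ∈ l, q ≠ v → q ≠ w → Commute (x v) (x q) := fun q hq hqv hqw =>
      hcomm v hv q hq (Ne.symm hqv) fun h => hqw (hleaf q hq h)
    rw [apply_prod_map_eq_erase_update hf hl hv hw hvw x hcv,
      apply_prod_map_eq_erase_update hf (hll'.nodup_iff.mp hl) (hll'.subset hv) (hll'.subset hw)
        hvw x fun q hq => hcv q (hll'.symm.subset hq)]
    exact ih (hl.erase v) (hll'.erase v) _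
      (commute_update_of_forall_adj_eq hl hv hw hleaf x hcomm)
      (by simp [List.length_erase_of_mem hv, hn])

end ClassFunction

namespace SupportedOn

variable {ι : Type*} [DecidableEq ι] {A B : Matrix ι ι ℝ} {S T : Set ι}

lemma sub_one_apply_eq_zero_s3 (hA : SupportedOn A S) {i j : ι} (hij : ¬(i ∈ S ∧ j ∈ S)) :
    (A - 1) i j = 0 := by
  rw [Matrix.sub_apply, hA i j hij, Matrix.one_apply, sub_self]

lemma sub_one_mul_sub_one_eq_zero_s3 [Fintype ι] (hA : SupportedOn A S) (hB : SupportedOn B T)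
    (hST : Disjoint S T) : (A - 1) * (B - 1) = 0 := by
  ext i j
  simp only [Matrix.mul_apply, Matrix.zero_apply]
  refine Finset.sum_eq_zero fun k _ => ?_
  by_cases hk : k ∈ S
  · rw [hB.sub_one_apply_eq_zero_s3 fun h => hST.notMem_of_mem_left hk h.1, mul_zero]
  · rw [hA.sub_one_apply_eq_zero_s3 fun h => hk h.2, zero_mul]

lemma commute_of_disjoint [Fintype ι] (hA : SupportedOn A S) (hB : SupportedOn B T)
    (hST : Disjoint S T) : Commute A B := by
  have hAB := hA.sub_one_mul_sub_one_eq_zero_s3 hB hST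
  have hBA := hB.sub_one_mul_sub_one_eq_zero_s3 hA hST.symm
  calc A * B = (A - 1) * (B - 1) + A + B - 1 := by noncomm_ring
    _ = (B - 1) * (A - 1) + B + A - 1 := by rw [hAB, hBA]; abel
    _ = B * A := by noncomm_ring

end SupportedOn

theorem stmt3_general {ι : Type*} [Fintype ι] [DecidableEq ι] {d : ℕ}
    (S : Fin d → Set ι) (M : Fin d → Matrix ι ι ℝ)
    (hM : ∀ k, SupportedOn (M k) (S k))
    (hacyc : (genLineGraph S).IsAcyclic) :
    ∀ π : Equiv.Perm (Fin d),
      ((List.ofFn fun k => M (π k)).reverse.prod).charpoly =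
        ((List.ofFn fun k => M k).reverse.prod).charpoly := by
  intro π
  have hcomm : ∀ a b, a ≠ b → ¬(genLineGraph S).Adj a b → Commute (M a) (M b) :=
    fun a b hab hadj => (hM a).commute_of_disjoint (hM b) <| Set.disjoint_iff_inter_eq_empty.mpr <|
      Set.not_nonempty_iff_eq_empty.mp fun h => hadj ⟨hab, h⟩
  have hperm : (List.ofFn π).reverse.Perm (List.ofFn id).reverse :=
    (List.reverse_perm _).trans ((π.ofFn_comp_perm id).trans (List.reverse_perm _).symm)
  have key := hacyc.apply_prod_map_eq_of_perm Matrix.charpoly_mul_comm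
    (List.nodup_reverse.mpr (List.nodup_ofFn.mpr π.injective)) hperm M
    fun a _ b _ => hcomm a b
  rw [List.map_reverse, List.map_reverse, List.map_ofFn, List.map_ofFn] at key
  exact key

theorem stmt3 {ι : Type*} [Fintype ι] [DecidableEq ι] {d : ℕ} (hd : 1 ≤ d)
    (S : Fin d → Set ι) (M : Fin d → Matrix ι ι ℝ)
    (hM : ∀ k, SupportedOn (M k) (S k))
    (hacyc : (genLineGraph S).IsAcyclic) :
    ∀ π : Equiv.Perm (Fin d),
      ((List.ofFn fun k => M (π k)).reverse.prod).charpoly =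
        ((List.ofFn fun k => M k).reverse.prod).charpoly :=
  stmt3_general S M hM hacyc
end

section
/- Let n = r₁·r₂ with integers r₁, r₂ ≥ 2. Then there exists a finite sequence C_1, C_2, …, C_{r₁+r₂} of subsets of {0,…,n−1}, each of cardinality r₁ or r₂, of length exactly r₁ + r₂, such that the ordered product M_{C_{r₁+r₂}}⋯M_{C_2}·M_{C_1} of the corresponding clique-averaging matrices equals (1/n)·J. -/
/-!
Identify `{0,…,n−1}` with the grid `Fin r₁ × Fin r₂`. Averaging successively over the `r₁` rows
(disjoint cliques of size `r₂`) replaces every entry by its row mean; averaging afterwards over the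
`r₂` columns (disjoint cliques of size `r₁`) replaces each row mean by the mean of all of them, which
is the global mean.
-/

/-- The clique-averaging matrix of a subset `C` of `{0,…,n−1}`:
`(M_C)_{ij} = 1/|C|` if `i, j ∈ C`; `(M_C)_{ii} = 1` if `i ∉ C`; `0` otherwise. -/
noncomputable def avgM {n : ℕ} (C : Finset (Fin n)) : Matrix (Fin n) (Fin n) ℝ :=
  Matrix.of fun i j => if i ∈ C ∧ j ∈ C then ((C.card : ℝ))⁻¹ else if i = j then 1 else 0

open Finset

theorem card_filter_fst_eq {α β γ : Type*} [Fintype α] [Fintype γ] [DecidableEq β]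
    (e : α ≃ β × γ) (b : β) : #{x | (e x).1 = b} = Fintype.card γ := by
  rw [← Fintype.card_subtype, Fintype.card_congr
    ((e.subtypeEquiv (q := fun p => p.1 = b) fun _ => Iff.rfl).trans
      (Equiv.prodSubtypeFstEquivSubtypeProd (p := (· = b)))), Fintype.card_prod,
    Fintype.card_unique, one_mul]

theorem card_filter_snd_eq {α β γ : Type*} [Fintype α] [Fintype β] [DecidableEq γ]
    (e : α ≃ β × γ) (c : γ) : #{x | (e x).2 = c} = Fintype.card β :=
  card_filter_fst_eq (e.trans (Equiv.prodComm β γ)) c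

theorem avgM_mul_apply {n : ℕ} (C : Finset (Fin n)) (B : Matrix (Fin n) (Fin n) ℝ) (i j : Fin n) :
    (avgM C * B) i j = if i ∈ C then (#C : ℝ)⁻¹ * ∑ k ∈ C, B k j else B i j := by
  rw [Matrix.mul_apply]
  split_ifs with hi
  · have hrow : ∀ k, avgM C i k = if k ∈ C then (#C : ℝ)⁻¹ else 0 := fun k => by
      by_cases hk : k ∈ C
      · simp [avgM, hi, hk]
      · simp [avgM, hk, ne_of_mem_of_not_mem hi hk]
    simp only [hrow, ite_mul, zero_mul, sum_ite_mem, univ_inter, mul_sum]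
  · simp [avgM, hi, ite_and]

theorem prod_map_avgM_fiber {n : ℕ} {ι : Type*} [DecidableEq ι] (f : Fin n → ι) (c : ℕ)
    (l : List ι) (hl : l.Nodup) (hc : ∀ x ∈ l, #{i | f i = x} = c) :
    (l.map fun x => avgM {i | f i = x}).prod =
      Matrix.of fun i j =>
        if f i ∈ l then (if f i = f j then (c : ℝ)⁻¹ else 0) else if i = j then 1 else 0 := by
  induction l with
  | nil => ext i j; simp [Matrix.one_apply]
  | cons a l ih =>
    obtain ⟨ha, hl⟩ := List.nodup_cons.mp hl
    rw [List.map_cons, List.prod_cons, ih hl fun x hx => hc x (List.mem_cons_of_mem a hx)]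
    ext i j
    rw [avgM_mul_apply]
    simp only [Matrix.of_apply, mem_filter_univ]
    by_cases hi : f i = a
    · -- the fibre of `a` is untouched by the later cliques, since `a ∉ l`
      have hcol : ∀ k ∈ ({k | f k = a} : Finset (Fin n)),
          (if f k ∈ l then (if f k = f j then (c : ℝ)⁻¹ else 0) else if k = j then 1 else 0) =
            if k = j then 1 else 0 := fun k hk => by
        rw [(mem_filter.mp hk).2, if_neg ha]
      rw [if_pos hi, sum_congr rfl hcol, sum_ite_eq', hc a List.mem_cons_self]
      by_cases hj : f j = a <;> simp [hi, hj, eq_comm]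
    · simp [hi]

theorem prod_reverse_ofFn_avgM_fiber {n r : ℕ} (f : Fin n → Fin r) (c : ℕ)
    (hc : ∀ x, #{i | f i = x} = c) :
    (List.ofFn fun x => avgM {i | f i = x}).reverse.prod =
      Matrix.of fun i j => if f i = f j then (c : ℝ)⁻¹ else 0 := by
  rw [List.ofFn_eq_map, ← List.map_reverse,
    prod_map_avgM_fiber f c _ (List.nodup_reverse.mpr (List.nodup_finRange r)) fun x _ => hc x]
  ext i j
  simp

theorem of_snd_eq_mul_of_fst_eq {α β γ : Type*} [Fintype α] [Fintype β] [Fintype γ]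
    [DecidableEq β] [DecidableEq γ] (e : α ≃ β × γ) (s t : ℝ) :
    (Matrix.of fun i j => if (e i).2 = (e j).2 then s else 0) *
        (Matrix.of fun i j => if (e i).1 = (e j).1 then t else 0) =
      (s * t) • Matrix.of fun _ _ => 1 := by
  ext i j
  simp only [Matrix.mul_apply, Matrix.of_apply]
  rw [Fintype.sum_equiv e _
    (fun p => (if (e i).2 = p.2 then s else 0) * (if p.1 = (e j).1 then t else 0)) fun _ => rfl,
    Fintype.sum_prod_type]
  simp

theorem stmt7_general {n r₁ r₂ : ℕ} (hn : n = r₁ * r₂) :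
    ∃ Cs : Fin (r₁ + r₂) → Finset (Fin n),
      (∀ t, (Cs t).card = r₁ ∨ (Cs t).card = r₂) ∧
      (List.ofFn fun t => avgM (Cs t)).reverse.prod =
        (n : ℝ)⁻¹ • Matrix.of (fun _ _ => (1 : ℝ)) := by
  let e : Fin n ≃ Fin r₁ × Fin r₂ := (finCongr hn).trans finProdFinEquiv.symm
  have hrow (a : Fin r₁) : #{i | (e i).1 = a} = r₂ := by
    rw [card_filter_fst_eq, Fintype.card_fin]
  have hcol (b : Fin r₂) : #{i | (e i).2 = b} = r₁ := by
    rw [card_filter_snd_eq, Fintype.card_fin]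
  refine ⟨Fin.append (fun a => ({i | (e i).1 = a} : Finset _))
    (fun b => ({i | (e i).2 = b} : Finset _)), ?_, ?_⟩
  · exact Fin.addCases (fun a => by simp [hrow]) (fun b => by simp [hcol])
  · rw [List.ofFn_comp' _ avgM, List.ofFn_fin_append, List.map_append, List.reverse_append,
      List.prod_append, ← List.ofFn_comp', ← List.ofFn_comp',
      prod_reverse_ofFn_avgM_fiber (fun i => (e i).2) r₁ hcol,
      prod_reverse_ofFn_avgM_fiber (fun i => (e i).1) r₂ hrow, of_snd_eq_mul_of_fst_eq, hn,
      Nat.cast_mul, mul_inv]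

theorem stmt7 {n r₁ r₂ : ℕ} (hr₁ : 2 ≤ r₁) (hr₂ : 2 ≤ r₂) (hn : n = r₁ * r₂) :
    ∃ Cs : Fin (r₁ + r₂) → Finset (Fin n),
      (∀ t, (Cs t).card = r₁ ∨ (Cs t).card = r₂) ∧
      (List.ofFn fun t => avgM (Cs t)).reverse.prod =
        (n : ℝ)⁻¹ • Matrix.of (fun _ _ => (1 : ℝ)) :=
  stmt7_general hn
end

section
/- Let n = r₁·r₂⋯r_k with integers k ≥ 1 and r_j ≥ 2 for all j. Then there exists a finite sequence of subsets of {0,…,n−1}, each of cardinality equal to r_j for some j ∈ {1,…,k}, of length exactly Σ_{i=1}^{k} Π_{j≠i} r_j, such that the ordered product of the corresponding clique-averaging matrices equals (1/n)·J. -/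
open Finset Matrix
open scoped Kronecker

variable {R : Type*} [Field R] {ι κ β γ : Type*}

variable (R) in
noncomputable def cliqueAvg [DecidableEq ι] (C : Finset ι) : Matrix ι ι R :=
  Matrix.of fun i j => if i ∈ C ∧ j ∈ C then ((C.card : R))⁻¹ else if i = j then 1 else 0

variable (R) in
def ReachesConsensus [Fintype ι] [DecidableEq ι] (L : List (Finset ι)) : Prop :=
  (L.map (cliqueAvg R)).prod = (Fintype.card ι : R)⁻¹ • Matrix.of fun _ _ => 1

theorem smul_allOnes_kronecker_smul_allOnes (a b : R) :
    (a • Matrix.of fun _ _ => (1 : R) : Matrix β β R) ⊗ₖ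
        (b • Matrix.of fun _ _ => 1 : Matrix γ γ R) =
      (a * b) • Matrix.of fun _ _ => 1 := by
  ext
  simp

theorem list_prod_kronecker_one [Fintype β] [Fintype γ] [DecidableEq β] [DecidableEq γ]
    (L : List (Matrix β β R)) : (L.map (· ⊗ₖ (1 : Matrix γ γ R))).prod = L.prod ⊗ₖ 1 := by
  induction L with
  | nil => simp
  | cons A L ih => simp [ih, ← mul_kronecker_mul]

theorem prod_map_toList_univ_mulSingle {M : Type*} [Monoid M] [Fintype γ] [DecidableEq γ]
    (a : M) : ((univ : Finset γ).toList.map fun c => Pi.mulSingle c a).prod = fun _ => a := by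
  funext c
  rw [Pi.list_prod_apply, List.map_map, List.prod_map_eq_pow_single c,
    List.count_eq_one_of_mem (nodup_toList _) (mem_toList.mpr (mem_univ c))]
  · simp
  · intro c' hc' _
    simp [hc']

section CliqueAvg

variable [DecidableEq ι] [DecidableEq κ]

theorem cliqueAvg_univ [Fintype ι] :
    cliqueAvg R (univ : Finset ι) = (Fintype.card ι : R)⁻¹ • Matrix.of fun _ _ => 1 := by
  ext i j
  simp [cliqueAvg]

theorem cliqueAvg_map_equiv (e : ι ≃ κ) (C : Finset ι) :
    cliqueAvg R (C.map e.toEmbedding) = reindex e e (cliqueAvg R C) := by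
  ext i j
  simp [cliqueAvg, mem_map_equiv, e.symm_apply_eq]

theorem list_prod_cliqueAvg_map_equiv [Fintype ι] [Fintype κ] (e : ι ≃ κ)
    (L : List (Finset ι)) :
    ((L.map (·.map e.toEmbedding)).map (cliqueAvg R)).prod =
      reindex e e (L.map (cliqueAvg R)).prod := by
  rw [← coe_reindexAlgEquiv R R, map_list_prod, List.map_map, List.map_map]
  simp [Function.comp_def, cliqueAvg_map_equiv]

theorem ReachesConsensus.map_equiv [Fintype ι] [Fintype κ] {L : List (Finset ι)}
    (hL : ReachesConsensus R L) (e : ι ≃ κ) :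
    ReachesConsensus R (L.map (·.map e.toEmbedding)) := by
  rw [ReachesConsensus, list_prod_cliqueAvg_map_equiv, hL, Fintype.card_congr e]
  ext i j
  simp

theorem reachesConsensus_nil [Fintype ι] [Subsingleton ι] :
    ReachesConsensus R ([] : List (Finset ι)) := by
  ext i j
  have : Unique ι := uniqueOfSubsingleton i
  simp [Subsingleton.elim i j]

theorem cliqueAvg_product_singleton (D : Finset ι) (c : κ) :
    cliqueAvg R (D ×ˢ {c}) = blockDiagonal (Pi.mulSingle c (cliqueAvg R D)) := by
  ext ⟨b, c₁⟩ ⟨b', c₂⟩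
  by_cases h₁ : c = c₁ <;> by_cases h₂ : c = c₂ <;> subst_vars <;>
    simp [cliqueAvg, blockDiagonal_apply, one_apply, Ne.symm, and_comm (a := b = b'), ite_and, *]

theorem list_prod_cliqueAvg_product_singleton [Fintype ι] [Fintype κ] (D : Finset ι) :
    (((univ : Finset κ).toList.map fun c => D ×ˢ {c}).map (cliqueAvg R)).prod =
      cliqueAvg R D ⊗ₖ 1 := by
  simp_rw [List.map_map, Function.comp_def, cliqueAvg_product_singleton, kronecker_one]
  rw [← prod_map_toList_univ_mulSingle (cliqueAvg R D), ← blockDiagonalRingHom_apply,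
    map_list_prod, List.map_map]
  rfl

end CliqueAvg

section Lift

variable [Fintype γ]

variable (γ) in
noncomputable def sliceLift (L : List (Finset β)) : List (Finset (β × γ)) :=
  L.flatMap fun D => (univ : Finset γ).toList.map fun c => D ×ˢ {c}

theorem length_sliceLift (L : List (Finset β)) :
    (sliceLift γ L).length = L.length * Fintype.card γ := by
  simp [sliceLift, List.length_flatMap]

theorem exists_card_eq_of_mem_sliceLift {L : List (Finset β)} {C : Finset (β × γ)}
    (hC : C ∈ sliceLift γ L) : ∃ D ∈ L, C.card = D.card := by
  simp only [sliceLift, List.mem_flatMap, List.mem_map] at hC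
  obtain ⟨D, hD, c, -, rfl⟩ := hC
  exact ⟨D, hD, by simp⟩

variable [Fintype β]

variable (β) in
noncomputable def consensusStep (L : List (Finset γ)) : List (Finset (β × γ)) :=
  sliceLift γ [univ] ++ (sliceLift β L).map (·.map (Equiv.prodComm γ β).toEmbedding)

theorem length_consensusStep (L : List (Finset γ)) :
    (consensusStep β L).length = Fintype.card γ + L.length * Fintype.card β := by
  simp [consensusStep, length_sliceLift]

theorem card_of_mem_consensusStep {L : List (Finset γ)} {C : Finset (β × γ)}
    (hC : C ∈ consensusStep β L) : C.card = Fintype.card β ∨ ∃ D ∈ L, C.card = D.card := by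
  rcases List.mem_append.mp hC with hC | hC
  · obtain ⟨D, hD, hCD⟩ := exists_card_eq_of_mem_sliceLift hC
    simp_all
  · obtain ⟨C', hC', rfl⟩ := List.mem_map.mp hC
    right
    simpa using exists_card_eq_of_mem_sliceLift hC'

variable [DecidableEq β] [DecidableEq γ]

theorem list_prod_cliqueAvg_sliceLift (L : List (Finset β)) :
    ((sliceLift γ L).map (cliqueAvg R)).prod = (L.map (cliqueAvg R)).prod ⊗ₖ 1 := by
  rw [sliceLift, List.flatMap, List.map_flatten, List.prod_flatten, ← list_prod_kronecker_one,
    List.map_map, List.map_map, List.map_map]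
  congr 1
  exact List.map_congr_left fun D _ => list_prod_cliqueAvg_product_singleton D

theorem ReachesConsensus.consensusStep {L : List (Finset γ)} (hL : ReachesConsensus R L) :
    ReachesConsensus R (consensusStep β L) := by
  have hcolumns : (((sliceLift β L).map (·.map (Equiv.prodComm γ β).toEmbedding)).map
      (cliqueAvg R)).prod = 1 ⊗ₖ (L.map (cliqueAvg R)).prod := by
    rw [list_prod_cliqueAvg_map_equiv, list_prod_cliqueAvg_sliceLift, one_kronecker, kronecker_one]
  rw [ReachesConsensus, _root_.consensusStep, List.map_append, List.prod_append, hcolumns,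
    list_prod_cliqueAvg_sliceLift, List.map_singleton, List.prod_singleton,
    ← mul_kronecker_mul, mul_one, one_mul, cliqueAvg_univ, hL, smul_allOnes_kronecker_smul_allOnes]
  simp [mul_comm]

end Lift

theorem Fin.prod_univ_erase_succ {M : Type*} [CommMonoid M] {k : ℕ} (f : Fin (k + 1) → M)
    (i : Fin k) : ∏ j ∈ univ.erase i.succ, f j = f 0 * ∏ j ∈ univ.erase i, f j.succ := by
  have : univ.erase i.succ = Finset.cons 0 ((univ.erase i).map (succEmb k)) (by simp) := by
    ext j
    cases j using Fin.cases <;> simp [succ_ne_zero, eq_comm]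
  rw [this, Finset.prod_cons, prod_map]
  rfl

theorem Fin.sum_prod_univ_erase_succ {M : Type*} [CommSemiring M] {k : ℕ} (f : Fin (k + 1) → M) :
    ∑ i, ∏ j ∈ univ.erase i, f j =
      ∏ j, f (Fin.succ j) + f 0 * ∑ i, ∏ j ∈ univ.erase i, f (Fin.succ j) := by
  simp only [sum_univ_succ, prod_univ_erase_succ, ← mul_sum]
  congr 1
  rw [univ_succ, erase_cons, prod_map]
  rfl

theorem exists_reachesConsensus (R : Type*) [Field R] {k : ℕ} (r : Fin k → ℕ) :
    ∃ L : List (Finset (Fin (∏ j, r j))), (∀ C ∈ L, ∃ j, C.card = r j) ∧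
      L.length = ∑ i, ∏ j ∈ univ.erase i, r j ∧ ReachesConsensus R L := by
  induction k with
  | zero =>
    have : Subsingleton (Fin (∏ j, r j)) := by
      rw [Fin.prod_univ_zero]
      infer_instance
    exact ⟨[], by simp, by simp, reachesConsensus_nil⟩
  | succ k ih =>
    obtain ⟨L, hcard, hlen, hL⟩ := ih (fun j : Fin k => r j.succ)
    let e : Fin (r 0) × Fin (∏ j : Fin k, r j.succ) ≃ Fin (∏ j, r j) :=
      finProdFinEquiv.trans (finCongr (Fin.prod_univ_succ r).symm)
    refine ⟨(consensusStep (Fin (r 0)) L).map (·.map e.toEmbedding), ?_, ?_,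
      hL.consensusStep.map_equiv e⟩
    · simp only [List.mem_map, forall_exists_index, and_imp, forall_apply_eq_imp_iff₂, card_map]
      intro C hC
      rcases card_of_mem_consensusStep hC with hC | ⟨D, hD, hCD⟩
      · exact ⟨0, by simpa using hC⟩
      · obtain ⟨j, hj⟩ := hcard D hD
        exact ⟨j.succ, hCD.trans hj⟩
    · rw [List.length_map, length_consensusStep, hlen, Fin.sum_prod_univ_erase_succ]
      simp [mul_comm]

theorem stmt9_general {n k : ℕ} (r : Fin k → ℕ)
    (hn : n = ∏ j, r j) :
    ∃ Cs : Fin (∑ i, ∏ j ∈ Finset.univ.erase i, r j) → Finset (Fin n),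
      (∀ t, ∃ j, (Cs t).card = r j) ∧
      (List.ofFn fun t => avgM (Cs t)).reverse.prod =
        (n : ℝ)⁻¹ • Matrix.of (fun _ _ => (1 : ℝ)) := by
  subst hn
  obtain ⟨L, hcard, hlen, hL⟩ := exists_reachesConsensus ℝ r
  have hlen' : L.reverse.length = ∑ i, ∏ j ∈ univ.erase i, r j := by
    rw [List.length_reverse, hlen]
  refine ⟨fun t => L.reverse[t.cast hlen'.symm],
    fun t => hcard _ (List.mem_reverse.mp (List.getElem_mem _)), ?_⟩
  have hofn : (List.ofFn fun t => avgM L.reverse[t.cast hlen'.symm]) =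
      L.reverse.map (cliqueAvg ℝ) := by
    rw [← List.ofFn_congr hlen' fun t => avgM L.reverse[t]]
    exact List.ofFn_getElem_eq_map _ _
  rw [hofn, List.map_reverse, List.reverse_reverse, hL, Fintype.card_fin]

theorem stmt9 {n k : ℕ} (hk : 1 ≤ k) (r : Fin k → ℕ) (hr : ∀ j, 2 ≤ r j)
    (hn : n = ∏ j, r j) :
    ∃ Cs : Fin (∑ i, ∏ j ∈ Finset.univ.erase i, r j) → Finset (Fin n),
      (∀ t, ∃ j, (Cs t).card = r j) ∧
      (List.ofFn fun t => avgM (Cs t)).reverse.prod =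
        (n : ℝ)⁻¹ • Matrix.of (fun _ _ => (1 : ℝ)) :=
  stmt9_general r hn
end

section
/- Let m, n ≥ 2 be integers such that m divides n and every prime dividing n also divides m. Then there exists a finite sequence of subsets of {0,…,n−1}, each of cardinality exactly m, of length δ(n,m)·n/m, such that the ordered product of the corresponding clique-averaging matrices equals (1/n)·J. -/
/-- `cliqueDelta n m = max_{p prime, p ∣ m} ⌈v_p(n) / v_p(m)⌉`, where `v_p` is the
`p`-adic valuation. -/
def cliqueDelta (n m : ℕ) : ℕ :=
  m.primeFactors.sup fun p =>
    (⌈((n.factorization p : ℚ)) / ((m.factorization p : ℚ))⌉).toNat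

/-!
Read `Fin n` as mixed-radix numerals: `n = ∏_p p ^ v_p(n)` gives `v_p(n)` digits in base `p` for
each prime `p ∣ n`. Fix a window `w` of digit positions whose bases multiply to `m`. The numerals
agreeing outside `w` form `n / m` disjoint cliques of size `m`, and the product of their averaging
matrices is the Kronecker product that averages each digit in `w` and keeps the others. Per digit
these factors are `1` or the idempotent `J / p`, so the product over a family of windows covering
all positions averages every digit, i.e. equals `J / n`. Windows of `v_p(m)` consecutive base-`p`
positions cover the `v_p(n)` positions in `⌈v_p(n) / v_p(m)⌉ ≤ δ(n, m)` rounds.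
-/
open Finset Matrix

section CliqueProducts

variable {n : ℕ}

lemma avgM_sub_one_apply_eq_zero {C : Finset (Fin n)} {i j : Fin n} (h : ¬(i ∈ C ∧ j ∈ C)) :
    (avgM C - 1) i j = 0 := by
  simp [avgM, one_apply, h]

lemma avgM_sub_one_mul_of_disjoint {C D : Finset (Fin n)} (h : Disjoint C D) :
    (avgM C - 1) * (avgM D - 1) = 0 := by
  ext i j
  rw [mul_apply, Matrix.zero_apply]
  refine Finset.sum_eq_zero fun x _ => ?_
  by_cases hx : x ∈ C
  · rw [avgM_sub_one_apply_eq_zero (fun h' => disjoint_left.1 h hx h'.1), mul_zero]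
  · rw [avgM_sub_one_apply_eq_zero (fun h' => hx h'.2), zero_mul]

/-- The perturbations `avgM C - 1` of disjoint cliques annihilate each other, so their product
does not depend on the order. -/
lemma list_prod_map_avgM {l : List (Finset (Fin n))} (hl : l.Pairwise Disjoint) :
    (l.map avgM).prod = 1 + (l.map fun C => avgM C - 1).sum := by
  induction l with
  | nil => simp
  | cons C l ih =>
    obtain ⟨hC, hl⟩ := List.pairwise_cons.1 hl
    have hkill : (avgM C - 1) * (l.map fun D => avgM D - 1).sum = 0 := by
      rw [← List.sum_map_mul_left]
      exact List.sum_eq_zero fun M hM => by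
        obtain ⟨D, hD, rfl⟩ := List.mem_map.1 hM
        exact avgM_sub_one_mul_of_disjoint (hC D hD)
    rw [List.map_cons, List.prod_cons, ih hl, List.map_cons, List.sum_cons]
    calc avgM C * (1 + (l.map fun D => avgM D - 1).sum)
        = 1 + (avgM C - 1) + (l.map fun D => avgM D - 1).sum
          + (avgM C - 1) * (l.map fun D => avgM D - 1).sum := by noncomm_ring
      _ = 1 + ((avgM C - 1) + (l.map fun D => avgM D - 1).sum) := by rw [hkill]; abel

variable {β : Type*} [DecidableEq β]

noncomputable def fiberList (f : Fin n → β) : List (Finset (Fin n)) :=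
  (univ.image f).toList.map fun b => ({i | f i = b} : Finset (Fin n))

lemma pairwise_disjoint_fiberList (f : Fin n → β) : (fiberList f).Pairwise Disjoint :=
  List.pairwise_map.2 <| (nodup_toList _).pairwise_of_forall_ne fun _ _ _ _ hne =>
    disjoint_filter.2 fun _ _ h₁ h₂ => hne (h₁.symm.trans h₂)

lemma exists_eq_fiber_of_mem_fiberList {f : Fin n → β} {C : Finset (Fin n)}
    (hC : C ∈ fiberList f) : ∃ i, C = ({j | f j = f i} : Finset (Fin n)) := by
  obtain ⟨b, hb, rfl⟩ := List.mem_map.1 hC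
  obtain ⟨i, -, rfl⟩ := mem_image.1 (mem_toList.1 hb)
  exact ⟨i, rfl⟩

lemma length_fiberList_mul {f : Fin n → β} {c : ℕ} (hc : ∀ i, #{j | f j = f i} = c) :
    (fiberList f).length * c = n := by
  have hsum := card_eq_sum_card_image f (univ : Finset (Fin n))
  rw [card_univ, Fintype.card_fin] at hsum
  rw [fiberList, List.length_map, length_toList]
  refine (sum_const_nat fun b hb => ?_).symm.trans hsum.symm
  obtain ⟨i, -, rfl⟩ := mem_image.1 hb
  exact hc i

lemma list_prod_map_avgM_fiberList (f : Fin n → β) :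
    ((fiberList f).map avgM).reverse.prod =
      of fun i j => if f i = f j then (#{k | f k = f i} : ℝ)⁻¹ else 0 := by
  have hdisj : (fiberList f).reverse.Pairwise Disjoint :=
    List.pairwise_reverse.2 ((pairwise_disjoint_fiberList f).imp fun h => h.symm)
  rw [← List.map_reverse, list_prod_map_avgM hdisj, List.map_reverse, List.sum_reverse,
    fiberList, List.map_map, sum_map_toList]
  ext i j
  rw [Matrix.add_apply, Matrix.sum_apply, sum_eq_single (f i)]
  · by_cases h : f i = f j
    · simp [avgM, one_apply, h]
    · have hij : i ≠ j := fun hij => h (congrArg f hij)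
      simp [avgM, Ne.symm h, hij, h]
  · intro b _ hb
    exact avgM_sub_one_apply_eq_zero fun h => hb (by simpa using h.1 : f i = b).symm
  · simp

end CliqueProducts

section PiKronecker

variable {κ R : Type*} [Fintype κ] [CommSemiring R]

def Matrix.piKronecker {X Y : κ → Type*} (A : ∀ k, Matrix (X k) (Y k) R) :
    Matrix (∀ k, X k) (∀ k, Y k) R :=
  of fun x y => ∏ k, A k (x k) (y k)

lemma Matrix.piKronecker_mul [DecidableEq κ] {X Y Z : κ → Type*} [∀ k, Fintype (Y k)]
    (A : ∀ k, Matrix (X k) (Y k) R) (B : ∀ k, Matrix (Y k) (Z k) R) :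
    piKronecker A * piKronecker B = piKronecker fun k => A k * B k := by
  ext x z
  simp only [piKronecker, mul_apply, of_apply, Fintype.prod_sum, prod_mul_distrib]

lemma Matrix.piKronecker_one {X : κ → Type*} [∀ k, DecidableEq (X k)] :
    piKronecker (fun k => (1 : Matrix (X k) (X k) R)) = 1 := by
  ext x y
  by_cases h : x = y
  · simp [piKronecker, one_apply, h]
  · obtain ⟨k, hk⟩ := Function.ne_iff.1 h
    simp only [piKronecker, of_apply, one_apply, h, if_false]
    exact prod_eq_zero (mem_univ k) (if_neg hk)

lemma Matrix.list_prod_map_piKronecker [DecidableEq κ] {X : κ → Type*} [∀ k, Fintype (X k)]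
    [∀ k, DecidableEq (X k)] {ι : Type*} (l : List ι) (A : ι → ∀ k, Matrix (X k) (X k) R) :
    (l.map fun i => piKronecker (A i)).prod = piKronecker fun k => (l.map fun i => A i k).prod := by
  induction l with
  | nil => exact piKronecker_one.symm
  | cons i l ih => simp only [List.map_cons, List.prod_cons, ih, piKronecker_mul]

end PiKronecker

lemma IsIdempotentElem.list_prod_map_ite {M ι : Type*} [Monoid M] {u : M}
    (hu : IsIdempotentElem u) (p : ι → Prop) [DecidablePred p] (l : List ι) :
    (l.map fun i => if p i then u else 1).prod = if ∃ i ∈ l, p i then u else 1 := by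
  induction l with
  | nil => simp
  | cons i l ih =>
    rw [List.map_cons, List.prod_cons, ih]
    by_cases hi : p i <;> by_cases hl : ∃ j ∈ l, p j <;> simp [hi, hl, hu.eq]

noncomputable def uniformAvg (q : ℕ) : Matrix (Fin q) (Fin q) ℝ :=
  (q : ℝ)⁻¹ • of fun _ _ => 1

lemma isIdempotentElem_uniformAvg (q : ℕ) : IsIdempotentElem (uniformAvg q) := by
  ext i j
  have hq : (q : ℝ) ≠ 0 := Nat.cast_ne_zero.2 (Fin.pos i).ne'
  simp [uniformAvg, mul_apply]
  field_simp

section Windows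

variable {κ : Type*} [Fintype κ] [DecidableEq κ] {q : κ → ℕ} {n : ℕ}

noncomputable def windowAvg (q : κ → ℕ) (w : Finset κ) :
    Matrix (∀ k, Fin (q k)) (∀ k, Fin (q k)) ℝ :=
  piKronecker fun k => if k ∈ w then uniformAvg (q k) else 1

lemma restrict_compl_eq_iff {X : κ → Type*} {w : Finset κ} {x y : ∀ k, X k} :
    (wᶜ).restrict x = (wᶜ).restrict y ↔ ∀ k ∉ w, x k = y k := by
  simp [funext_iff, Finset.restrict]

lemma windowAvg_apply (w : Finset κ) (x y : ∀ k, Fin (q k)) :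
    windowAvg q w x y = if ∀ k ∉ w, x k = y k then (∏ k ∈ w, (q k : ℝ))⁻¹ else 0 := by
  split_ifs with h
  · rw [windowAvg, piKronecker, of_apply, ← prod_inv_distrib, ← Fintype.prod_ite_mem w]
    refine prod_congr rfl fun k _ => ?_
    by_cases hk : k ∈ w
    · simp [hk, uniformAvg]
    · simp [hk, h k hk, one_apply]
  · push Not at h
    obtain ⟨k, hk, hxy⟩ := h
    exact prod_eq_zero (mem_univ k) (by simp [hk, hxy])

lemma list_prod_map_windowAvg {W : List (Finset κ)} (hW : ∀ k, ∃ w ∈ W, k ∈ w) :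
    (W.map (windowAvg q)).prod = piKronecker fun k => uniformAvg (q k) := by
  unfold windowAvg
  rw [list_prod_map_piKronecker]
  congr 1
  ext1 k
  rw [(isIdempotentElem_uniformAvg (q k)).list_prod_map_ite, if_pos (hW k)]

noncomputable def windowCliques (e : Fin n ≃ ∀ k, Fin (q k)) (w : Finset κ) :
    List (Finset (Fin n)) :=
  fiberList fun i => (wᶜ).restrict (e i)

section

variable (e : Fin n ≃ ∀ k, Fin (q k))

lemma piKronecker_uniformAvg_submatrix :
    (piKronecker fun k => uniformAvg (q k)).submatrix e e = (n : ℝ)⁻¹ • of fun _ _ => 1 := by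
  have hn : ∏ k, q k = n := by simpa using (Fintype.card_congr e).symm
  ext i j
  simp [piKronecker, uniformAvg, ← hn, prod_inv_distrib]

variable (w : Finset κ)

lemma card_fiber_restrict_compl (i : Fin n) :
    #{j | (wᶜ).restrict (e j) = (wᶜ).restrict (e i)} = ∏ k ∈ w, q k := by
  rw [card_equiv e (t := Fintype.piFinset fun k => if k ∈ w then univ else {e i k}) fun j => ?_,
    Fintype.card_piFinset, ← Fintype.prod_ite_mem w]
  · refine prod_congr rfl fun k _ => ?_
    split_ifs <;> simp
  · simp only [mem_filter, mem_univ, true_and, restrict_compl_eq_iff, Fintype.mem_piFinset]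
    refine forall_congr' fun k => ?_
    split_ifs with hk <;> simp [hk]

lemma card_of_mem_windowCliques {C : Finset (Fin n)} (hC : C ∈ windowCliques e w) :
    #C = ∏ k ∈ w, q k := by
  obtain ⟨i, rfl⟩ := exists_eq_fiber_of_mem_fiberList hC
  exact card_fiber_restrict_compl e w i

lemma length_windowCliques_mul : (windowCliques e w).length * ∏ k ∈ w, q k = n :=
  length_fiberList_mul (card_fiber_restrict_compl e w)

lemma list_prod_map_avgM_windowCliques :
    ((windowCliques e w).map avgM).reverse.prod = (windowAvg q w).submatrix e e := by
  rw [windowCliques, list_prod_map_avgM_fiberList]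
  ext i j
  rw [of_apply, card_fiber_restrict_compl, submatrix_apply, windowAvg_apply, Nat.cast_prod]
  simp only [restrict_compl_eq_iff]

lemma list_prod_map_windowAvg_submatrix {W : List (Finset κ)}
    (hW : ∀ k, ∃ w ∈ W, k ∈ w) :
    (W.map fun w => (windowAvg q w).submatrix e e).prod = (n : ℝ)⁻¹ • of fun _ _ => 1 := by
  have hmap := map_list_prod (reindexAlgEquiv ℝ ℝ e.symm) (W.map (windowAvg q))
  simp only [coe_reindexAlgEquiv, reindex_apply, Equiv.symm_symm, List.map_map] at hmap
  rw [← piKronecker_uniformAvg_submatrix e, ← list_prod_map_windowAvg hW, hmap]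
  rfl

end

theorem exists_avgM_list_of_windows (e : Fin n ≃ ∀ k, Fin (q k)) {m : ℕ} {W : List (Finset κ)}
    (hW : ∀ w ∈ W, ∏ k ∈ w, q k = m) (hcover : ∀ k, ∃ w ∈ W, k ∈ w) :
    ∃ L : List (Finset (Fin n)), L.length * m = W.length * n ∧ (∀ C ∈ L, #C = m) ∧
      (L.map avgM).reverse.prod = (n : ℝ)⁻¹ • of fun _ _ => 1 := by
  refine ⟨W.flatMap (windowCliques e), ?_, fun C hC => ?_, ?_⟩
  · rw [List.length_flatMap, ← List.sum_map_mul_right,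
      List.map_congr_left fun w hw => by rw [← hW w hw, length_windowCliques_mul]]
    simp
  · obtain ⟨w, hw, hCw⟩ := List.mem_flatMap.1 hC
    rw [card_of_mem_windowCliques e w hCw, hW w hw]
  · rw [List.map_flatMap, List.reverse_flatMap, List.flatMap_def, List.prod_flatten, List.map_map]
    have hround : List.prod ∘ List.reverse ∘ (fun w => (windowCliques e w).map avgM) =
        fun w => (windowAvg q w).submatrix e e :=
      funext (list_prod_map_avgM_windowCliques e)
    rw [hround]
    exact list_prod_map_windowAvg_submatrix e fun k => by simpa using hcover k

end Windows

section PrimeDigits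

/-- The `t`-th block of `a` consecutive positions in `Fin b`, shifted back to end at `b` when it
would overrun. -/
def window (a b t : ℕ) : Finset (Fin b) :=
  {j | min (t * a) (b - a) ≤ j ∧ j < min (t * a) (b - a) + a}

lemma card_window {a b : ℕ} (t : ℕ) (h : a ≤ b) : #(window a b t) = a := by
  have hmap : (window a b t).map Fin.valEmbedding =
      Ico (min (t * a) (b - a)) (min (t * a) (b - a) + a) := by
    ext x
    simp only [window, mem_map, mem_filter, mem_univ, true_and, Fin.valEmbedding_apply, mem_Ico]
    constructor
    · rintro ⟨j, hj, rfl⟩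
      exact hj
    · intro hx
      exact ⟨⟨x, by omega⟩, hx, rfl⟩
  rw [← card_map Fin.valEmbedding, hmap, Nat.card_Ico, Nat.add_sub_cancel_left]

lemma exists_mem_window {a b δ : ℕ} (ha : 0 < a) (hb : b ≤ δ * a) (j : Fin b) :
    ∃ t < δ, j ∈ window a b t := by
  have hdiv := Nat.div_add_mod j a
  have hmod := Nat.mod_lt j ha
  have hj := j.isLt
  refine ⟨j / a, ?_, ?_⟩
  · rw [Nat.div_lt_iff_lt_mul ha]
    omega
  · simp only [window, mem_filter, mem_univ, true_and]
    have : a * (j / a) = j / a * a := mul_comm _ _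
    omega

abbrev PrimeDigit (n : ℕ) : Type := Σ p : n.primeFactors, Fin (n.factorization p)

lemma prod_pow_factorization_of_primeFactors_subset {m : ℕ} {s : Finset ℕ} (hm : m ≠ 0)
    (hs : m.primeFactors ⊆ s) : ∏ p ∈ s, p ^ m.factorization p = m := by
  rw [← Finsupp.prod_of_support_subset _ (Nat.support_factorization m ▸ hs) _ fun _ _ => pow_zero _,
    Nat.prod_factorization_pow_eq_self hm]

lemma prod_primeDigit {n : ℕ} (hn : n ≠ 0) : ∏ k : PrimeDigit n, (k.1 : ℕ) = n := by
  rw [Fintype.prod_sigma]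
  simpa using (Nat.prod_primeFactors_coe_pow_factorization hn).symm

noncomputable def primeDigitEquiv {n : ℕ} (hn : n ≠ 0) : Fin n ≃ ∀ k : PrimeDigit n, Fin k.1 :=
  (Fintype.equivFinOfCardEq (by simp [Fintype.card_pi, prod_primeDigit hn])).symm

def primeWindow (n m t : ℕ) : Finset (PrimeDigit n) :=
  univ.sigma fun p => window (m.factorization p) (n.factorization p) t

lemma prod_primeWindow {n m : ℕ} (hn : n ≠ 0) (hm : m ≠ 0) (hmn : m ∣ n) (t : ℕ) :
    ∏ k ∈ primeWindow n m t, (k.1 : ℕ) = m := by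
  rw [primeWindow, prod_sigma]
  simp only [prod_const]
  rw [prod_congr rfl fun p _ => by
      rw [card_window t ((Nat.factorization_le_iff_dvd hm hn).2 hmn p)],
    prod_coe_sort n.primeFactors fun p => p ^ m.factorization p]
  exact prod_pow_factorization_of_primeFactors_subset hm (Nat.primeFactors_mono hmn hn)

lemma factorization_le_cliqueDelta_mul {n m p : ℕ} (hp : p ∈ m.primeFactors) :
    n.factorization p ≤ cliqueDelta n m * m.factorization p := by
  obtain ⟨hprime, hpm, hm⟩ := Nat.mem_primeFactors.1 hp
  have hpos : (0 : ℚ) < m.factorization p :=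
    Nat.cast_pos.2 (hprime.factorization_pos_of_dvd hm hpm)
  have hceil : ⌈(n.factorization p : ℚ) / m.factorization p⌉.toNat ≤ cliqueDelta n m :=
    le_sup (f := fun p => (⌈(n.factorization p : ℚ) / m.factorization p⌉).toNat) hp
  have hdiv : (n.factorization p : ℚ) / m.factorization p ≤ cliqueDelta n m :=
    (Int.le_ceil _).trans ((Int.cast_le.2 (Int.self_le_toNat _)).trans (by exact_mod_cast hceil))
  rw [div_le_iff₀ hpos] at hdiv
  exact_mod_cast hdiv

lemma exists_mem_primeWindow {n m : ℕ} (hm : m ≠ 0) (hprimes : ∀ p : ℕ, p.Prime → p ∣ n → p ∣ m)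
    (k : PrimeDigit n) : ∃ t < cliqueDelta n m, k ∈ primeWindow n m t := by
  obtain ⟨⟨p, hp⟩, j⟩ := k
  obtain ⟨hprime, hpn, -⟩ := Nat.mem_primeFactors.1 hp
  have hpm : p ∣ m := hprimes p hprime hpn
  obtain ⟨t, ht, hj⟩ := exists_mem_window (hprime.factorization_pos_of_dvd hm hpm)
    (factorization_le_cliqueDelta_mul (Nat.mem_primeFactors.2 ⟨hprime, hpm, hm⟩)) j
  exact ⟨t, ht, mem_sigma.2 ⟨mem_univ _, hj⟩⟩

end PrimeDigits

theorem stmt10 {n m : ℕ} (hm : 2 ≤ m) (hn : 2 ≤ n) (hdvd : m ∣ n)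
    (hprimes : ∀ p : ℕ, p.Prime → p ∣ n → p ∣ m) :
    ∃ Cs : Fin (cliqueDelta n m * n / m) → Finset (Fin n),
      (∀ t, (Cs t).card = m) ∧
      (List.ofFn fun t => avgM (Cs t)).reverse.prod =
        (n : ℝ)⁻¹ • Matrix.of (fun _ _ => (1 : ℝ)) := by
  have hm0 : m ≠ 0 := by omega
  have hn0 : n ≠ 0 := by omega
  obtain ⟨L, hlen, hcard, hprod⟩ := exists_avgM_list_of_windows (primeDigitEquiv hn0) (m := m)
    (W := (List.range (cliqueDelta n m)).map (primeWindow n m))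
    (by simpa using fun t _ => prod_primeWindow hn0 hm0 hdvd t)
    (fun k => by simpa using exists_mem_primeWindow hm0 hprimes k)
  rw [List.length_map, List.length_range] at hlen
  have hlen' : L.length = cliqueDelta n m * n / m := by
    rw [← hlen, Nat.mul_div_cancel _ (by omega)]
  refine ⟨fun t => L[Fin.cast hlen'.symm t], fun t => hcard _ (List.getElem_mem _), ?_⟩
  rw [List.ofFn_congr hlen'.symm]
  simpa [List.ofFn_getElem_eq_map] using hprod
end
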